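/- Let 𝔤 be a real Lie algebra, W a representation of 𝔤 (with action written x·w), and K = Hom(𝔤, W) ⊕ 𝔤 equipped with the W-valued pairing ⟨(Φ,u),(Ψ,v)⟩ = (1/2)(Φ(v) + Ψ(u)) and the Dorfman bracket ⟦(Φ,u),(Ψ,v)⟧ = (L_u Ψ − L_v Φ + δ(Φ(v)), [u,v]_𝔤), where (L_u Ψ)(x) = u·Ψ(x) − Ψ([u,x]_𝔤) and δ(w)(x) = x·w. For a linear map D : 𝔤 → 𝔤 define J_D : K → K by J_D(Φ, u) = (−Φ∘D, D(u)). Then J_D is a generalized complex structure on K (i.e. J_D² = −id, ⟨J_D x, J_D y⟩ = ⟨x, y⟩ for all x, y, and ⟦J_D x, J_D y⟧ − ⟦x, y⟧ − J_D(⟦J_D x, y⟧ + ⟦x, J_D y⟧) = 0 for all x, y) if and only if D² = −id_𝔤 and D is a Nijenhuis operator on 𝔤, i.e. [D u, D v]_𝔤 = D([D u, v]_𝔤 + [u, D v]_𝔤 − D([u, v]_𝔤)) for all u, v ∈ 𝔤. -/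
import Mathlib


/-- The adjoint action `ad_u(x) = ⁅u, x⁆` as a linear map. -/
def adG {g : Type*} [LieRing g] [LieAlgebra ℝ g] (u : g) : g →ₗ[ℝ] g where
  toFun x := ⁅u, x⁆
  map_add' x y := lie_add u x y
  map_smul' c x := lie_smul c u x

/-- The `W`-valued pairing `⟨(Φ,u),(Ψ,v)⟩ = (1/2)(Φ(v) + Ψ(u))` on `Hom(𝔤,W) ⊕ 𝔤`. -/
noncomputable def glPair {g W : Type*} [LieRing g] [LieAlgebra ℝ g]
    [AddCommGroup W] [Module ℝ W]
    (X Y : (g →ₗ[ℝ] W) × g) : W :=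
  ((2 : ℝ)⁻¹) • (X.1 Y.2 + Y.1 X.2)

/-- The Dorfman bracket `⟦(Φ,u),(Ψ,v)⟧ = (L_u Ψ − L_v Φ + δ(Φ(v)), [u,v]_𝔤)` on
`Hom(𝔤,W) ⊕ 𝔤`, where `(L_u Ψ)(x) = u·Ψ(x) − Ψ([u,x])` and `δ(w)(x) = x·w`. -/
def glBr {g W : Type*} [LieRing g] [LieAlgebra ℝ g] [AddCommGroup W] [Module ℝ W]
    (ρW : g →ₗ[ℝ] W →ₗ[ℝ] W)
    (X Y : (g →ₗ[ℝ] W) × g) : (g →ₗ[ℝ] W) × g :=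
  ((ρW X.2 ∘ₗ Y.1 - Y.1 ∘ₗ adG X.2) - (ρW Y.2 ∘ₗ X.1 - X.1 ∘ₗ adG Y.2)
     + ρW.flip (X.1 Y.2),
   ⁅X.2, Y.2⁆)

/-- For a real Lie algebra `𝔤` with representation `W` and a linear map `D : 𝔤 → 𝔤`,
the map `J_D(Φ,u) = (−Φ∘D, D(u))` on `K = Hom(𝔤,W) ⊕ 𝔤` is a generalized complex
structure (i.e. `J_D² = −id`, `J_D` preserves the pairing, and `J_D` is integrable for
the Dorfman bracket) iff `D² = −id` and `D` is a Nijenhuis operator on `𝔤`. -/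
theorem stmt10 {g W : Type*} [LieRing g] [LieAlgebra ℝ g] [AddCommGroup W] [Module ℝ W]
    (ρW : g →ₗ[ℝ] W →ₗ[ℝ] W)
    (hrep : ∀ x y : g, ρW ⁅x, y⁆ = ρW x ∘ₗ ρW y - ρW y ∘ₗ ρW x)
    (D : g →ₗ[ℝ] g)
    (J : ((g →ₗ[ℝ] W) × g) →ₗ[ℝ] ((g →ₗ[ℝ] W) × g))
    (hJ : ∀ (Φ : g →ₗ[ℝ] W) (u : g), J (Φ, u) = (-(Φ ∘ₗ D), D u)) :
    ((∀ x, J (J x) = -x) ∧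
     (∀ x y, glPair (J x) (J y) = glPair x y) ∧
     (∀ x y, glBr ρW (J x) (J y) - glBr ρW x y
        - J (glBr ρW (J x) y + glBr ρW x (J y)) = 0))
    ↔ ((∀ u, D (D u) = -u) ∧
       (∀ u v : g, ⁅D u, D v⁆ = D (⁅D u, v⁆ + ⁅u, D v⁆ - D ⁅u, v⁆))) := by
  constructor
  · rintro ⟨h1, -, h3⟩
    have hD : ∀ u, D (D u) = -u := by
      intro u
      have h := h1 (0, u)
      simp [hJ, Prod.ext_iff] at h
      exact h
    refine ⟨hD, fun u v => ?_⟩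
    have h := congrArg Prod.snd (h3 (0, u) (0, v))
    simp [glBr, hJ] at h
    rw [sub_sub, sub_eq_zero] at h
    rw [h, map_sub, map_add, hD]
    abel
  · rintro ⟨hD, hN⟩
    have hN' : ∀ a b : g, ⁅D a, D b⁆ = D ⁅D a, b⁆ + D ⁅a, D b⁆ + ⁅a, b⁆ := by
      intro a b
      rw [hN a b, map_sub, map_add, hD]
      abel
    refine ⟨fun x => ?_, fun x y => ?_, fun x y => ?_⟩
    · obtain ⟨Φ, u⟩ := x
      rw [hJ, hJ]
      simp [Prod.ext_iff, hD, LinearMap.ext_iff]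
    · obtain ⟨Φ, u⟩ := x; obtain ⟨Ψ, v⟩ := y
      simp [hJ, glPair, hD]
    · obtain ⟨Φ, u⟩ := x; obtain ⟨Ψ, v⟩ := y
      rw [Prod.ext_iff]
      constructor
      · ext x
        simp [glBr, hJ, adG, hD, hN']
        abel
      · simp [glBr, hJ, hN', hD]
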